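/- Let ŵ ∈ ℝ^{kd}, γ > 0 and τ > 0 with 2τ < γ. Suppose (x,y) ∈ ℝ^d × {1,…,k} is misclassified by ŵ, i.e., there exists y' ≠ y with ⟨ŵ_{y'}, x⟩ > ⟨ŵ_y, x⟩. Then every point (x_i, y) of the pancake P_ŵ^τ(x,y) satisfies ⟨ŵ, Ψ(x_i,y) − Ψ(x_i,y')⟩ ≤ 2τ < γ; consequently ℓ_γ(ŵ;(x_i,y)) > 0 and every label ŷ_i attaining the maximum in the definition of ℓ_γ(ŵ;(x_i,y)) satisfies ŷ_i ≠ y. -/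

import Mathlib

open scoped BigOperators RealInnerProductSpace
open Finset

/-- The class-sensitive feature map `Ψ : ℝ^d × {1,…,k} → ℝ^{kd}`: the `y`-th block of
`d` coordinates of `Psi d k x y` equals `x`, the remaining coordinates are zero. -/
noncomputable def Psi (d k : ℕ) (x : EuclideanSpace ℝ (Fin d)) (y : Fin k) :
    EuclideanSpace ℝ (Fin k × Fin d) :=
  WithLp.toLp 2 (fun p : Fin k × Fin d => if p.1 = y then x p.2 else 0)

/-- The `y`-th block `w_y ∈ ℝ^d` of a vector `w ∈ ℝ^{kd}`. -/
noncomputable def block (d k : ℕ) (w : EuclideanSpace ℝ (Fin k × Fin d)) (y : Fin k) :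
    EuclideanSpace ℝ (Fin d) :=
  WithLp.toLp 2 (fun j : Fin d => w (y, j))

/-- The multiclass pancake `P_w^τ(x,y)`: pairs `(x',y')` with `y' = y` and
`|⟨w_ȳ, x' − x⟩| ≤ τ` for every label `ȳ`. -/
def pancake (d k : ℕ) (w : EuclideanSpace ℝ (Fin k × Fin d)) (τ : ℝ)
    (x : EuclideanSpace ℝ (Fin d)) (y : Fin k) :
    Set (EuclideanSpace ℝ (Fin d) × Fin k) :=
  {p | p.2 = y ∧ ∀ ybar : Fin k, |⟪block d k w ybar, p.1 - x⟫| ≤ τ}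

/-- The γ-scaled multiclass hinge loss
`ℓ_γ(w;(x,y)) = max_{y'} (1[y' ≠ y] − (1/γ)·⟨w, Ψ(x,y) − Ψ(x,y')⟩)`. -/
noncomputable def hinge (d k : ℕ) [NeZero k] (γ : ℝ)
    (w : EuclideanSpace ℝ (Fin k × Fin d)) (x : EuclideanSpace ℝ (Fin d)) (y : Fin k) : ℝ :=
  Finset.univ.sup' Finset.univ_nonempty
    (fun y' : Fin k => (if y' ≠ y then (1:ℝ) else 0) - (1/γ) * ⟪w, Psi d k x y - Psi d k x y'⟫)

section

variable {d k : ℕ} (w : EuclideanSpace ℝ (Fin k × Fin d))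

lemma inner_Psi (x : EuclideanSpace ℝ (Fin d)) (y : Fin k) :
    ⟪w, Psi d k x y⟫ = ⟪block d k w y, x⟫ := by
  simp only [PiLp.inner_apply, RCLike.inner_apply, conj_trivial, Psi, block,
    Fintype.sum_prod_type]
  rw [Finset.sum_eq_single y (fun b _ hb => by simp [if_neg hb]) (by simp)]
  simp

lemma inner_Psi_sub_Psi (x : EuclideanSpace ℝ (Fin d)) (y y' : Fin k) :
    ⟪w, Psi d k x y - Psi d k x y'⟫ = ⟪block d k w y, x⟫ - ⟪block d k w y', x⟫ := by
  rw [inner_sub_right, inner_Psi, inner_Psi]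

/-- Moving inside the pancake changes each score `⟪w_ȳ, ·⟫` by at most `τ`, so a margin that is
nonpositive at `x` is at most `2τ` at `xi`. -/
lemma inner_Psi_sub_Psi_le_of_mem_pancake {τ : ℝ} {x xi : EuclideanSpace ℝ (Fin d)} {y y' : Fin k}
    (hxi : (xi, y) ∈ pancake d k w τ x y)
    (hle : ⟪block d k w y, x⟫ ≤ ⟪block d k w y', x⟫) :
    ⟪w, Psi d k xi y - Psi d k xi y'⟫ ≤ 2 * τ := by
  have hy := (abs_le.mp (hxi.2 y)).2
  have hy' := (abs_le.mp (hxi.2 y')).1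
  rw [inner_sub_right] at hy hy'
  rw [inner_Psi_sub_Psi]
  linarith

variable [NeZero k] (γ : ℝ) (x : EuclideanSpace ℝ (Fin d)) (y : Fin k)

lemma le_hinge (y' : Fin k) :
    (if y' ≠ y then (1:ℝ) else 0) - (1/γ) * ⟪w, Psi d k x y - Psi d k x y'⟫
      ≤ hinge d k γ w x y :=
  Finset.le_sup' (fun z : Fin k => (if z ≠ y then (1:ℝ) else 0)
    - (1/γ) * ⟪w, Psi d k x y - Psi d k x z⟫) (Finset.mem_univ y')

variable {γ w x y}

lemma hinge_pos_of_inner_Psi_sub_Psi_lt {y' : Fin k} (hγ : 0 < γ) (hy' : y' ≠ y)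
    (hlt : ⟪w, Psi d k x y - Psi d k x y'⟫ < γ) :
    0 < hinge d k γ w x y := by
  refine lt_of_lt_of_le ?_ (le_hinge w γ x y y')
  have : (1/γ) * ⟪w, Psi d k x y - Psi d k x y'⟫ < 1 := by
    rw [one_div_mul_eq_div, div_lt_one hγ]
    exact hlt
  rw [if_pos hy']
  linarith

/-- The term of the true label `y` vanishes, so a positive loss is never attained there. -/
lemma ne_of_hinge_eq_of_hinge_pos {yhat : Fin k} (hpos : 0 < hinge d k γ w x y)
    (heq : hinge d k γ w x y
      = (if yhat ≠ y then (1:ℝ) else 0) - (1/γ) * ⟪w, Psi d k x y - Psi d k x yhat⟫) :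
    yhat ≠ y := by
  rintro rfl
  simp only [ne_eq, not_true_eq_false, if_false, sub_self, inner_zero_right, mul_zero] at heq
  linarith

end

theorem stmt_4_general (d k : ℕ) [NeZero k] (γ τ : ℝ) (hγ : 0 < γ) (hτγ : 2 * τ < γ)
    (what : EuclideanSpace ℝ (Fin k × Fin d)) (x : EuclideanSpace ℝ (Fin d)) (y y' : Fin k)
    (hy' : y' ≠ y) (hmis : ⟪block d k what y, x⟫ < ⟪block d k what y', x⟫) :
    ∀ xi : EuclideanSpace ℝ (Fin d), (xi, y) ∈ pancake d k what τ x y →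
      (⟪what, Psi d k xi y - Psi d k xi y'⟫ ≤ 2 * τ ∧ 2 * τ < γ ∧
       0 < hinge d k γ what xi y ∧
       ∀ yhat : Fin k,
         hinge d k γ what xi y
           = (if yhat ≠ y then (1:ℝ) else 0) - (1/γ) * ⟪what, Psi d k xi y - Psi d k xi yhat⟫ →
         yhat ≠ y) := by
  intro xi hxi
  have hmargin := inner_Psi_sub_Psi_le_of_mem_pancake what hxi hmis.le
  have hpos := hinge_pos_of_inner_Psi_sub_Psi_lt hγ hy' (hmargin.trans_lt hτγ)
  exact ⟨hmargin, hτγ, hpos, fun _ => ne_of_hinge_eq_of_hinge_pos hpos⟩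

/-- if `(x,y)` is misclassified by `what` via label `y' ≠ y`, and `2τ < γ`, then
every point `(xi, y)` of the pancake `P_what^τ(x,y)` satisfies
`⟨what, Ψ(xi,y) − Ψ(xi,y')⟩ ≤ 2τ < γ`; consequently `ℓ_γ(what;(xi,y)) > 0` and every label
`yhat` attaining the maximum in the definition of `ℓ_γ(what;(xi,y))` satisfies `yhat ≠ y`. -/
theorem stmt_4 (d k : ℕ) [NeZero k] (γ τ : ℝ) (hγ : 0 < γ) (hτ : 0 < τ) (hτγ : 2 * τ < γ)
    (what : EuclideanSpace ℝ (Fin k × Fin d)) (x : EuclideanSpace ℝ (Fin d)) (y y' : Fin k)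
    (hy' : y' ≠ y) (hmis : ⟪block d k what y, x⟫ < ⟪block d k what y', x⟫) :
    ∀ xi : EuclideanSpace ℝ (Fin d), (xi, y) ∈ pancake d k what τ x y →
      (⟪what, Psi d k xi y - Psi d k xi y'⟫ ≤ 2 * τ ∧ 2 * τ < γ ∧
       0 < hinge d k γ what xi y ∧
       ∀ yhat : Fin k,
         hinge d k γ what xi y
           = (if yhat ≠ y then (1:ℝ) else 0) - (1/γ) * ⟪what, Psi d k xi y - Psi d k xi yhat⟫ →
         yhat ≠ y) :=
  stmt_4_general d k γ τ hγ hτγ what x y y' hy' hmis
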